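/- Let Q be a finite graded poset of rank r with |Q| = d. Then the dilation (r+2)·𝒪(Q) of the order polytope of Q is a lattice translate of a reflexive polytope; i.e. there exists a lattice point v ∈ ℤ^d such that (r+2)·𝒪(Q) − v is a reflexive polytope. -/

import Mathlib

open scoped Pointwise
open Filter MeasureTheory

variable {ι : Type*} [Fintype ι]

/-- `P ⊆ ℝ^ι` is a lattice polytope: the convex hull of finitely many points of `ℤ^ι`. -/
def IsLatticePolytope (P : Set (ι → ℝ)) : Prop :=
  ∃ V : Finset (ι → ℤ),
    P = convexHull ℝ ((fun v : ι → ℤ => fun i => (v i : ℝ)) '' (V : Set (ι → ℤ)))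

/-- The number of lattice points in the `m`-th dilation of `P`. -/
noncomputable def latticeCount (P : Set (ι → ℝ)) (m : ℕ) : ℕ :=
  Set.ncard {x : ι → ℤ | (fun i => (x i : ℝ)) ∈ (m : ℝ) • P}

/-- The number of lattice points on the boundary of the `m`-th dilation of `P`
(with the convention that this is `1` for `m = 0`). -/
noncomputable def boundaryCount (P : Set (ι → ℝ)) (m : ℕ) : ℕ :=
  if m = 0 then 1 else
    Set.ncard {x : ι → ℤ | (fun i => (x i : ℝ)) ∈ frontier ((m : ℝ) • P)}

/-- `P` is reflexive: a lattice polytope containing the origin in its interior whose dual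
polytope `P^∨ = {u : ⟨u,v⟩ ≤ 1 ∀ v ∈ P}` is again a lattice polytope. -/
def IsReflexive (P : Set (ι → ℝ)) : Prop :=
  IsLatticePolytope P ∧ 0 ∈ interior P ∧
    IsLatticePolytope {u : ι → ℝ | ∀ v ∈ P, ∑ i, u i * v i ≤ 1}

/-- The order polytope `𝒪(Q) ⊆ ℝ^Q` of a finite poset `Q`: all order-preserving maps
`Q → [0,1]`. -/
def orderPolytope (Q : Type*) [PartialOrder Q] : Set (Q → ℝ) :=
  {f | (∀ x, 0 ≤ f x ∧ f x ≤ 1) ∧ ∀ x y, x ≤ y → f x ≤ f y}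

/-- `e(Q)`: the number of linear extensions of `Q`, i.e. bijective order-preserving maps
from `Q` to the chain with `|Q|` elements. -/
noncomputable def linExtCount (Q : Type*) [Fintype Q] [PartialOrder Q] : ℕ :=
  Set.ncard {f : Q → Fin (Fintype.card Q) | Monotone f ∧ Function.Bijective f}

/-- `e_s(Q)`: the number of surjective order-preserving maps from `Q` to the chain with `s`
elements. -/
noncomputable def surjOrderPresCount (Q : Type*) [Fintype Q] [PartialOrder Q] (s : ℕ) : ℕ :=
  Set.ncard {f : Q → Fin s | Monotone f ∧ Function.Surjective f}

/-- `Q` is graded of rank `r`: every maximal chain of `Q` has length `r`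
(i.e. has `r + 1` elements). -/
def IsGradedOfRank (Q : Type*) [PartialOrder Q] (r : ℕ) : Prop :=
  ∀ C : Set Q, IsMaxChain (· ≤ ·) C → C.ncard = r + 1

/-!
Take `v` to be the height `h`, where `h x` is the largest size of a chain below `x`. In a graded
poset of rank `r`, `h` is `1` on minimal and `r + 1` on maximal elements and grows by one along
covers, so `P = (r + 2) • 𝒪(Q) - h` is cut out by `-p x ≤ 1` (`x` minimal), `p x ≤ 1` (`x`
maximal) and `p x - p y ≤ 1` (`x ⋖ y`): integral normals, right-hand sides `1`. The vertices of
`P` are the integral points `(r + 2) • g - h` for the `0/1` points `g` of `𝒪(Q)`, and by polar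
duality `P^∨` is the convex hull of `0` and the normals, hence a lattice polytope as well.
-/

section LatticePoint

variable {ι : Type*}

def IsLatticePoint (p : ι → ℝ) : Prop :=
  ∀ i, ∃ z : ℤ, p i = z

theorem IsLatticePoint.neg {p : ι → ℝ} (hp : IsLatticePoint p) : IsLatticePoint (-p) :=
  fun i => let ⟨z, hz⟩ := hp i; ⟨-z, by simp [hz]⟩

theorem IsLatticePoint.sub {p q : ι → ℝ} (hp : IsLatticePoint p) (hq : IsLatticePoint q) :
    IsLatticePoint (p - q) :=
  fun i => let ⟨a, ha⟩ := hp i; let ⟨b, hb⟩ := hq i; ⟨a - b, by simp [ha, hb]⟩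

theorem isLatticePoint_single [DecidableEq ι] (j : ι) : IsLatticePoint (Pi.single j (1 : ℝ)) :=
  fun i => ⟨if i = j then 1 else 0, by rw [Pi.single_apply]; split_ifs <;> simp⟩

theorem isLatticePolytope_convexHull {S : Set (ι → ℝ)} (hS : S.Finite)
    (hZ : ∀ s ∈ S, IsLatticePoint s) : IsLatticePolytope (convexHull ℝ S) := by
  have hcast : Function.Injective fun (v : ι → ℤ) i => (v i : ℝ) :=
    Int.cast_injective.comp_left
  have hrange : S ⊆ Set.range fun (v : ι → ℤ) i => (v i : ℝ) := fun s hs => by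
    choose z hz using hZ s hs
    exact ⟨z, funext fun i => (hz i).symm⟩
  refine ⟨(hS.preimage hcast.injOn).toFinset, ?_⟩
  rw [Set.Finite.coe_toFinset, Set.image_preimage_eq_of_subset hrange]

end LatticePoint

theorem zero_mem_interior_setOf_dotProduct_le_one {S : Set (ι → ℝ)} (hS : S.Finite) :
    (0 : ι → ℝ) ∈ interior {p : ι → ℝ | ∀ s ∈ S, s ⬝ᵥ p ≤ 1} := by
  refine mem_interior.2 ⟨⋂ s ∈ S, {p | s ⬝ᵥ p < 1}, ?_, ?_, by simp⟩
  · intro p hp s hs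
    exact (Set.mem_iInter₂.1 hp s hs).le
  · exact hS.isOpen_biInter fun s _ =>
      isOpen_lt (continuous_const.dotProduct continuous_id) continuous_const

theorem convex_setOf_dotProduct_le_one (P : Set (ι → ℝ)) :
    Convex ℝ {u : ι → ℝ | ∀ p ∈ P, u ⬝ᵥ p ≤ 1} := by
  intro u hu w hw a b ha hb hab p hp
  simp only [add_dotProduct, smul_dotProduct, smul_eq_mul]
  nlinarith [hu p hp, hw p hp]

theorem exists_dotProduct_eq (f : (ι → ℝ) →ₗ[ℝ] ℝ) : ∃ g : ι → ℝ, ∀ w, f w = g ⬝ᵥ w := by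
  classical
  exact ⟨fun i => f fun j => if i = j then 1 else 0, fun w => by
    simp [f.pi_apply_eq_sum_univ w, dotProduct, mul_comm]⟩

theorem polar_setOf_dotProduct_le_one {S : Set (ι → ℝ)} (hS : S.Finite) :
    {u : ι → ℝ | ∀ p ∈ {p : ι → ℝ | ∀ s ∈ S, s ⬝ᵥ p ≤ 1}, u ⬝ᵥ p ≤ 1} =
      convexHull ℝ (insert 0 S) := by
  refine subset_antisymm (fun u hu => ?_) (convexHull_min ?_ (convex_setOf_dotProduct_le_one _))
  · by_contra hnot
    obtain ⟨f, c, hf, hfu⟩ := geometric_hahn_banach_closed_point (convex_convexHull ℝ _)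
      ((hS.insert 0).isCompact_convexHull ℝ).isClosed hnot
    -- the separating functional, scaled to level `1`, is a point of the polyhedron
    obtain ⟨g, hg⟩ := exists_dotProduct_eq (f : (ι → ℝ) →ₗ[ℝ] ℝ)
    have hc : 0 < c := by
      simpa using hf 0 (subset_convexHull ℝ _ (Set.mem_insert 0 S))
    have hgS : c⁻¹ • g ∈ {p : ι → ℝ | ∀ s ∈ S, s ⬝ᵥ p ≤ 1} := fun s hs => by
      have := hf s (subset_convexHull ℝ _ (Set.mem_insert_of_mem 0 hs))
      rw [dotProduct_smul, dotProduct_comm, ← hg, smul_eq_mul, inv_mul_le_one₀ hc]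
      exact this.le
    have := hu _ hgS
    rw [dotProduct_smul, dotProduct_comm, ← hg, smul_eq_mul, inv_mul_le_one₀ hc] at this
    exact absurd hfu (not_lt.2 this)
  · rintro s (rfl | hs) p hp
    · simp
    · exact hp s hs

theorem isReflexive_of_convexHull_eq_setOf {T S : Set (ι → ℝ)} (hT : T.Finite)
    (hTZ : ∀ t ∈ T, IsLatticePoint t) (hS : S.Finite) (hSZ : ∀ s ∈ S, IsLatticePoint s)
    (hTS : convexHull ℝ T = {p | ∀ s ∈ S, s ⬝ᵥ p ≤ 1}) : IsReflexive (convexHull ℝ T) := by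
  refine ⟨isLatticePolytope_convexHull hT hTZ, ?_, ?_⟩
  · rw [hTS]
    exact zero_mem_interior_setOf_dotProduct_le_one hS
  · have h0 : IsLatticePoint (0 : ι → ℝ) := fun _ => ⟨0, by simp⟩
    convert isLatticePolytope_convexHull (hS.insert 0) (Set.forall_mem_insert.2 ⟨h0, hSZ⟩)
    rw [← polar_setOf_dotProduct_le_one hS, hTS]
    rfl

theorem image_sub_smul_convexHull {E : Type*} [AddCommGroup E] [Module ℝ E] (t : ℝ) (v : E)
    (s : Set E) :
    (fun x => x - v) '' (t • convexHull ℝ s) = convexHull ℝ ((fun x => t • x - v) '' s) := by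
  have := AffineMap.image_convexHull (t • AffineMap.id ℝ E - AffineMap.const ℝ E v) s
  simp only [AffineMap.coe_sub, AffineMap.coe_smul, AffineMap.coe_id, AffineMap.coe_const] at this
  rw [← Set.image_smul, Set.image_image]
  exact this

section FractionalValues

variable {α : Type*} {f : α → ℝ} {a : ℝ}

/-- Splitting off the lowest fractional level `a`: the first summand is the indicator of
`{a ≤ f}`, the second rescales the part of `f` above `a` back to `[0, 1]`. -/
theorem eq_smul_indicator_add_smul (ha : a < 1) (hf : ∀ x, f x < a → f x = 0) :
    f = a • ((fun t => if a ≤ t then 1 else 0) ∘ f) +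
      (1 - a) • ((fun t => max 0 ((t - a) / (1 - a))) ∘ f) := by
  have h1a : 1 - a ≠ 0 := by linarith
  funext x
  simp only [Pi.add_apply, Pi.smul_apply, Function.comp_apply, smul_eq_mul]
  by_cases hx : a ≤ f x
  · rw [if_pos hx, max_eq_right (div_nonneg (by linarith) (by linarith))]
    field_simp
    ring
  · rw [if_neg hx, hf x (not_le.1 hx), max_eq_left (div_nonpos_of_nonpos_of_nonneg
      (by linarith [hf x (not_le.1 hx)]) (by linarith))]
    ring

noncomputable def fractionalValues [Fintype α] (f : α → ℝ) : Finset ℝ :=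
  {t ∈ Finset.univ.image f | t ∈ Set.Ioo 0 1}

variable [Fintype α]

theorem mem_fractionalValues {t : ℝ} :
    t ∈ fractionalValues f ↔ (∃ x, f x = t) ∧ t ∈ Set.Ioo 0 1 := by
  simp [fractionalValues]

theorem eq_zero_or_eq_one_of_fractionalValues_eq_empty (hf : ∀ x, f x ∈ Set.Icc 0 1)
    (hF : fractionalValues f = ∅) (x : α) : f x = 0 ∨ f x = 1 := by
  have hx : f x ∉ Set.Ioo 0 1 := fun hx =>
    Finset.notMem_empty (f x) (hF ▸ mem_fractionalValues.2 ⟨⟨x, rfl⟩, hx⟩)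
  obtain ⟨h0, h1⟩ := hf x
  rcases h0.eq_or_lt with h0 | h0
  · exact Or.inl h0.symm
  · exact Or.inr (by_contra fun h1' => hx ⟨h0, h1.lt_of_ne h1'⟩)

/-- The rescaling sends the level `a` to `0` and the level `1` to `1`, so it loses a
fractional value. -/
theorem card_fractionalValues_rescale_lt (hf : ∀ x, f x ≤ 1) (ha : a ∈ fractionalValues f) :
    (fractionalValues ((fun t => max 0 ((t - a) / (1 - a))) ∘ f)).card <
      (fractionalValues f).card := by
  obtain ⟨-, ha0, ha1⟩ := mem_fractionalValues.1 ha
  refine (Finset.card_le_card (t := ((fractionalValues f).erase a).image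
    fun t => max 0 ((t - a) / (1 - a))) fun t ht => ?_).trans_lt
    (Finset.card_image_le.trans_lt (Finset.card_erase_lt_of_mem ha))
  obtain ⟨⟨x, rfl⟩, ht0, ht1⟩ := mem_fractionalValues.1 ht
  have hxa : a < f x := by
    by_contra h
    simp [div_nonpos_of_nonpos_of_nonneg (by linarith : f x - a ≤ 0)
      (by linarith : (0 : ℝ) ≤ 1 - a)] at ht0
  have hx1 : f x < 1 := (hf x).lt_of_ne fun h => by
    simp [h, div_self (by linarith : (1 : ℝ) - a ≠ 0)] at ht1
  exact Finset.mem_image.2 ⟨f x, Finset.mem_erase.2 ⟨hxa.ne',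
    mem_fractionalValues.2 ⟨⟨x, rfl⟩, ha0.trans hxa, hx1⟩⟩, rfl⟩

end FractionalValues

section OrderPolytope

variable {Q : Type*} [PartialOrder Q]

theorem convex_orderPolytope : Convex ℝ (orderPolytope Q) := by
  intro f hf g hg a b ha hb hab
  refine ⟨fun x => ⟨?_, ?_⟩, fun x y hxy => ?_⟩ <;>
    simp only [Pi.add_apply, Pi.smul_apply, smul_eq_mul]
  · nlinarith [(hf.1 x).1, (hg.1 x).1]
  · nlinarith [(hf.1 x).2, (hg.1 x).2]
  · nlinarith [hf.2 x y hxy, hg.2 x y hxy]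

theorem comp_mem_orderPolytope {f : Q → ℝ} (hf : f ∈ orderPolytope Q) {φ : ℝ → ℝ}
    (hφ : Monotone φ) (hφ01 : Set.MapsTo φ (Set.Icc 0 1) (Set.Icc 0 1)) :
    φ ∘ f ∈ orderPolytope Q :=
  ⟨fun x => hφ01 (hf.1 x), fun x y hxy => hφ (hf.2 x y hxy)⟩

theorem orderPolytope_subset_convexHull [Fintype Q] :
    orderPolytope Q ⊆ convexHull ℝ {f ∈ orderPolytope Q | ∀ x, f x = 0 ∨ f x = 1} := by
  intro f hf
  induction hn : (fractionalValues f).card using Nat.strong_induction_on generalizing f with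
  | _ n ih =>
  rcases (fractionalValues f).eq_empty_or_nonempty with hF | hF
  · exact subset_convexHull ℝ _
      ⟨hf, eq_zero_or_eq_one_of_fractionalValues_eq_empty hf.1 hF⟩
  set a := (fractionalValues f).min' hF
  have haF : a ∈ fractionalValues f := (fractionalValues f).min'_mem hF
  obtain ⟨-, ha0, ha1⟩ := mem_fractionalValues.1 haF
  have hbelow : ∀ x, f x < a → f x = 0 := fun x hx => by
    by_contra h0
    have hfrac : f x ∈ fractionalValues f := mem_fractionalValues.2
      ⟨⟨x, rfl⟩, lt_of_le_of_ne (hf.1 x).1 (Ne.symm h0), hx.trans ha1⟩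
    exact (Finset.min'_le _ _ hfrac).not_gt hx
  have hindicator : ((fun t => if a ≤ t then (1 : ℝ) else 0) ∘ f) ∈
      {g ∈ orderPolytope Q | ∀ x, g x = 0 ∨ g x = 1} := by
    refine ⟨comp_mem_orderPolytope hf (fun s t hst => ?_) (fun t _ => ?_), fun x => ?_⟩
    · split_ifs with hs ht <;> first | exact absurd (hs.trans hst) ht | exact le_rfl | norm_num
    · split_ifs <;> norm_num
    · simp only [Function.comp_apply]
      split_ifs <;> simp
  have hrescale : ((fun t => max 0 ((t - a) / (1 - a))) ∘ f) ∈ orderPolytope Q :=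
    comp_mem_orderPolytope hf
      (fun s t hst => max_le_max le_rfl (div_le_div_of_nonneg_right (by linarith) (by linarith)))
      fun t ht => ⟨le_max_left _ _,
        max_le zero_le_one ((div_le_one (by linarith)).2 (by linarith [ht.2]))⟩
  rw [eq_smul_indicator_add_smul ha1 hbelow]
  exact convex_convexHull ℝ _ (subset_convexHull ℝ _ hindicator)
    (ih _ (hn ▸ card_fractionalValues_rescale_lt (fun x => (hf.1 x).2) haF) hrescale rfl)
    ha0.le (by linarith) (by ring)

theorem orderPolytope_eq_convexHull [Fintype Q] :
    orderPolytope Q = convexHull ℝ {f ∈ orderPolytope Q | ∀ x, f x = 0 ∨ f x = 1} :=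
  orderPolytope_subset_convexHull.antisymm
    (convexHull_min (fun _ hf => hf.1) convex_orderPolytope)

theorem mem_image_sub_smul_orderPolytope {t : ℝ} (ht : 0 < t) (v p : Q → ℝ) :
    p ∈ (fun x => x - v) '' (t • orderPolytope Q) ↔
      (∀ x, -v x ≤ p x ∧ p x ≤ t - v x) ∧ ∀ x y, x ≤ y → p x + v x ≤ p y + v y := by
  have himage : p ∈ (fun x => x - v) '' (t • orderPolytope Q) ↔ p + v ∈ t • orderPolytope Q :=
    ⟨by rintro ⟨w, hw, rfl⟩; simpa using hw, fun h => ⟨p + v, h, by simp⟩⟩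
  rw [himage, Set.mem_smul_set_iff_inv_smul_mem₀ ht.ne']
  simp only [orderPolytope, Set.mem_ofPred_eq, Pi.smul_apply, Pi.add_apply, smul_eq_mul,
    mul_nonneg_iff_of_pos_left (inv_pos.2 ht), inv_mul_le_one₀ ht,
    mul_le_mul_iff_right₀ (inv_pos.2 ht)]
  refine and_congr (forall_congr' fun x => and_congr ?_ ?_) Iff.rfl <;> constructor <;>
    intro <;> linarith

end OrderPolytope

section ChainHeight

variable {Q : Type*} [PartialOrder Q] [Finite Q] {r : ℕ} {x y : Q}

/-- Height counted in elements: minimal elements have `chainHeight` one. -/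
noncomputable def chainHeight (x : Q) : ℕ :=
  sSup (Set.ncard '' {C : Set Q | IsChain (· ≤ ·) C ∧ C ⊆ Set.Iic x})

theorem bddAbove_ncard_chains (x : Q) :
    BddAbove (Set.ncard '' {C : Set Q | IsChain (· ≤ ·) C ∧ C ⊆ Set.Iic x}) :=
  ⟨Nat.card Q, by rintro _ ⟨C, -, rfl⟩; exact Set.ncard_le_card C⟩

theorem ncard_le_chainHeight {C : Set Q} (hC : IsChain (· ≤ ·) C) (hCx : C ⊆ Set.Iic x) :
    C.ncard ≤ chainHeight x :=
  le_csSup (bddAbove_ncard_chains x) ⟨C, ⟨hC, hCx⟩, rfl⟩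

theorem exists_chain_ncard_eq_chainHeight (x : Q) :
    ∃ C : Set Q, IsChain (· ≤ ·) C ∧ C ⊆ Set.Iic x ∧ C.ncard = chainHeight x := by
  have hne : (Set.ncard '' {C : Set Q | IsChain (· ≤ ·) C ∧ C ⊆ Set.Iic x}).Nonempty :=
    ⟨_, {x}, ⟨Set.subsingleton_singleton.isChain, Set.singleton_subset_iff.2 Set.self_mem_Iic⟩,
      rfl⟩
  obtain ⟨C, ⟨hC, hCx⟩, h⟩ := Nat.sSup_mem hne (bddAbove_ncard_chains x)
  exact ⟨C, hC, hCx, h⟩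

theorem chainHeight_eq_one_of_isMin (hx : IsMin x) : chainHeight x = 1 := by
  obtain ⟨C, -, hCx, hC⟩ := exists_chain_ncard_eq_chainHeight x
  refine le_antisymm ?_ ?_
  · rw [← hC, ← Set.ncard_singleton x]
    exact Set.ncard_le_ncard fun y hy => (hx.eq_of_le (hCx hy) :)
  · simpa using ncard_le_chainHeight Set.subsingleton_singleton.isChain
      (Set.singleton_subset_iff.2 Set.self_mem_Iic)

theorem IsGradedOfRank.ncard_le (hQ : IsGradedOfRank Q r) {C : Set Q}
    (hC : IsChain (· ≤ ·) C) : C.ncard ≤ r + 1 := by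
  obtain ⟨M, hM, hCM⟩ := hC.exists_maxChain
  exact hQ M hM ▸ Set.ncard_le_ncard hCM

/-- In a graded poset every maximal chain through `y` realises the height of `y`: a longer chain
below `y`, continued by the part of the maximal chain above `y`, would be too long. -/
theorem IsGradedOfRank.chainHeight_eq_ncard_inter_Iic (hQ : IsGradedOfRank Q r) {M : Set Q}
    (hM : IsMaxChain (· ≤ ·) M) (hy : y ∈ M) : chainHeight y = (M ∩ Set.Iic y).ncard := by
  refine le_antisymm ?_ (ncard_le_chainHeight (hM.isChain.mono Set.inter_subset_left)
    Set.inter_subset_right)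
  obtain ⟨C, hC, hCy, hCcard⟩ := exists_chain_ncard_eq_chainHeight y
  have hsplit : M = (M ∩ Set.Iic y) ∪ (M ∩ Set.Ioi y) := by
    ext w
    constructor
    · intro hw
      rcases eq_or_ne w y with rfl | hne
      · exact Or.inl ⟨hw, le_rfl⟩
      rcases hM.isChain hw hy hne with h | h
      · exact Or.inl ⟨hw, h⟩
      · exact Or.inr ⟨hw, lt_of_le_of_ne h hne.symm⟩
    · rintro (hw | hw) <;> exact hw.1
  have hdisj : ∀ {A : Set Q}, A ⊆ Set.Iic y → Disjoint A (M ∩ Set.Ioi y) :=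
    fun hA => Set.disjoint_left.2 fun w hwA hw => (hA hwA).not_gt hw.2
  have hchain : IsChain (· ≤ ·) (C ∪ (M ∩ Set.Ioi y)) := by
    refine isChain_union.2 ⟨hC, hM.isChain.mono Set.inter_subset_left, fun a ha b hb _ => ?_⟩
    exact Or.inl ((hCy ha).trans hb.2.le)
  have := hQ.ncard_le hchain
  rw [Set.ncard_union_eq (hdisj hCy), hCcard, ← hQ M hM] at this
  conv_rhs at this => rw [hsplit]
  rw [Set.ncard_union_eq (hdisj Set.inter_subset_right)] at this
  omega

theorem IsGradedOfRank.chainHeight_eq_of_isMax (hQ : IsGradedOfRank Q r) (hx : IsMax x) :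
    chainHeight x = r + 1 := by
  obtain ⟨M, hM, hxM⟩ := (Set.subsingleton_singleton (a := x)).isChain.exists_maxChain
  have hxM : x ∈ M := hxM rfl
  rw [hQ.chainHeight_eq_ncard_inter_Iic hM hxM, ← hQ M hM]
  congr 1
  refine Set.inter_eq_left.2 fun w hw => ?_
  rcases eq_or_ne w x with rfl | hne
  · exact le_rfl
  exact (hM.isChain hw hxM hne).elim id fun h => hx h

theorem IsGradedOfRank.chainHeight_eq_add_one_of_covBy (hQ : IsGradedOfRank Q r) (hxy : x ⋖ y) :
    chainHeight y = chainHeight x + 1 := by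
  have hpair : IsChain (· ≤ ·) ({x, y} : Set Q) := IsChain.pair hxy.le
  obtain ⟨M, hM, hxyM⟩ := hpair.exists_maxChain
  have hxM : x ∈ M := hxyM (by simp)
  have hyM : y ∈ M := hxyM (by simp)
  have hIic : M ∩ Set.Iic y = insert y (M ∩ Set.Iic x) := by
    ext w
    simp only [Set.mem_inter_iff, Set.mem_Iic, Set.mem_insert_iff]
    constructor
    · rintro ⟨hw, hwy⟩
      rcases hwy.eq_or_lt with rfl | hwy
      · exact Or.inl rfl
      rcases eq_or_ne w x with rfl | hne
      · exact Or.inr ⟨hw, le_rfl⟩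
      exact Or.inr ⟨hw, (hM.isChain hw hxM hne).resolve_right fun hxw =>
        hxy.2 (lt_of_le_of_ne hxw hne.symm) hwy⟩
    · rintro (rfl | ⟨hw, hwx⟩)
      · exact ⟨hyM, le_rfl⟩
      · exact ⟨hw, hwx.trans hxy.le⟩
  rw [hQ.chainHeight_eq_ncard_inter_Iic hM hyM, hQ.chainHeight_eq_ncard_inter_Iic hM hxM, hIic,
    Set.ncard_insert_of_notMem fun h => hxy.lt.not_ge h.2]

end ChainHeight

section FacetNormals

/-- Facet normals of `(r + 2) • 𝒪(Q) - chainHeight` when `Q` is graded of rank `r`. -/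
def facetNormals (Q : Type*) [PartialOrder Q] [DecidableEq Q] : Set (Q → ℝ) :=
  {s | (∃ x, IsMin x ∧ s = -Pi.single x 1) ∨ (∃ x, IsMax x ∧ s = Pi.single x 1) ∨
    ∃ x y, x ⋖ y ∧ s = Pi.single x 1 - Pi.single y 1}

variable {Q : Type*} [PartialOrder Q] [DecidableEq Q]

theorem finite_facetNormals [Finite Q] : (facetNormals Q).Finite := by
  refine (((Set.finite_range fun x : Q => -Pi.single x (1 : ℝ)).union
    (Set.finite_range fun x : Q => Pi.single x (1 : ℝ))).union
    (Set.finite_range fun p : Q × Q => Pi.single p.1 (1 : ℝ) - Pi.single p.2 1)).subset ?_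
  rintro s (⟨x, -, rfl⟩ | ⟨x, -, rfl⟩ | ⟨x, y, -, rfl⟩)
  · exact Or.inl (Or.inl ⟨x, rfl⟩)
  · exact Or.inl (Or.inr ⟨x, rfl⟩)
  · exact Or.inr ⟨(x, y), rfl⟩

theorem isLatticePoint_of_mem_facetNormals {s : Q → ℝ} (hs : s ∈ facetNormals Q) :
    IsLatticePoint s := by
  rcases hs with ⟨x, -, rfl⟩ | ⟨x, -, rfl⟩ | ⟨x, y, -, rfl⟩
  · exact (isLatticePoint_single x).neg
  · exact isLatticePoint_single x
  · exact (isLatticePoint_single x).sub (isLatticePoint_single y)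

theorem forall_mem_facetNormals_iff [Fintype Q] {p : Q → ℝ} :
    (∀ s ∈ facetNormals Q, s ⬝ᵥ p ≤ 1) ↔
      (∀ x, IsMin x → -p x ≤ 1) ∧ (∀ x, IsMax x → p x ≤ 1) ∧ ∀ x y, x ⋖ y → p x - p y ≤ 1 := by
  constructor
  · intro h
    refine ⟨fun x hx => ?_, fun x hx => ?_, fun x y hxy => ?_⟩
    · simpa using h _ (Or.inl ⟨x, hx, rfl⟩)
    · simpa using h _ (Or.inr (Or.inl ⟨x, hx, rfl⟩))
    · simpa [sub_dotProduct] using h _ (Or.inr (Or.inr ⟨x, y, hxy, rfl⟩))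
  · rintro ⟨hmin, hmax, hcov⟩ s (⟨x, hx, rfl⟩ | ⟨x, hx, rfl⟩ | ⟨x, y, hxy, rfl⟩)
    · simpa using hmin x hx
    · simpa using hmax x hx
    · simpa [sub_dotProduct] using hcov x y hxy

end FacetNormals

section Graded

variable {Q : Type*} [PartialOrder Q] [Fintype Q] {r : ℕ}

theorem IsGradedOfRank.monotone_add_chainHeight_iff (hQ : IsGradedOfRank Q r) {p : Q → ℝ} :
    Monotone (fun x => p x + chainHeight x) ↔ ∀ x y, x ⋖ y → p x - p y ≤ 1 := by
  classical
  let := Fintype.toLocallyFiniteOrder (α := Q)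
  rw [monotone_iff_forall_covBy]
  refine forall₃_congr fun x y hxy => ?_
  rw [hQ.chainHeight_eq_add_one_of_covBy hxy]
  push_cast
  constructor <;> intro <;> linarith

theorem IsGradedOfRank.mem_image_sub_chainHeight_iff (hQ : IsGradedOfRank Q r) {p : Q → ℝ} :
    p ∈ (fun x => x - fun i => (chainHeight i : ℝ)) '' (((r : ℝ) + 2) • orderPolytope Q) ↔
      (∀ x, IsMin x → -p x ≤ 1) ∧ (∀ x, IsMax x → p x ≤ 1) ∧ ∀ x y, x ⋖ y → p x - p y ≤ 1 := by
  have hmin {x : Q} (hx : IsMin x) : (chainHeight x : ℝ) = 1 := by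
    exact_mod_cast chainHeight_eq_one_of_isMin hx
  have hmax {x : Q} (hx : IsMax x) : (chainHeight x : ℝ) = r + 1 := by
    exact_mod_cast hQ.chainHeight_eq_of_isMax hx
  rw [mem_image_sub_smul_orderPolytope (by positivity), ← hQ.monotone_add_chainHeight_iff]
  constructor
  · rintro ⟨hbounds, hmono⟩
    exact ⟨fun x hx => by linarith [(hbounds x).1, hmin hx],
      fun x hx => by linarith [(hbounds x).2, hmax hx], fun x y hxy => hmono x y hxy⟩
  · rintro ⟨hbelow, habove, hmono⟩
    refine ⟨fun x => ⟨?_, ?_⟩, fun x y hxy => hmono hxy⟩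
    · obtain ⟨m, hmx, hm⟩ : ∃ m ≤ x, IsMin m := by
        simpa using Finset.univ.exists_le_minimal (Finset.mem_univ x)
      linarith [hmono hmx, hbelow m hm, hmin hm]
    · obtain ⟨m, hxm, hm⟩ : ∃ m, x ≤ m ∧ IsMax m := by
        simpa using Finset.univ.exists_le_maximal (Finset.mem_univ x)
      linarith [hmono hxm, habove m hm, hmax hm]

end Graded

/-- Let `Q` be a finite graded poset of rank `r` with `|Q| = d`. Then the
dilation `(r+2)·𝒪(Q)` of the order polytope of `Q` is a lattice translate of a reflexive
polytope: there is a lattice point `v ∈ ℤ^Q` with `(r+2)·𝒪(Q) - v` reflexive. -/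
theorem dilated_order_polytope_reflexive (Q : Type*) [Fintype Q] [PartialOrder Q]
    (r : ℕ) (hQ : IsGradedOfRank Q r) :
    ∃ v : Q → ℤ,
      IsReflexive ((fun x : Q → ℝ => x - fun i => (v i : ℝ)) ''
        (((r : ℝ) + 2) • orderPolytope Q)) := by
  classical
  refine ⟨fun x => chainHeight x, ?_⟩
  set V := {f ∈ orderPolytope Q | ∀ x, f x = 0 ∨ f x = 1}
  have hV : V.Finite := (Set.Finite.pi (t := fun _ : Q => ({0, 1} : Set ℝ))
    fun _ => by simp).subset fun f hf x _ => hf.2 x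
  have hP : (fun x => x - fun i => (chainHeight i : ℝ)) '' (((r : ℝ) + 2) • orderPolytope Q) =
      {p | ∀ s ∈ facetNormals Q, s ⬝ᵥ p ≤ 1} := by
    ext p
    rw [hQ.mem_image_sub_chainHeight_iff, Set.mem_ofPred_eq, forall_mem_facetNormals_iff]
  push_cast
  rw [orderPolytope_eq_convexHull, image_sub_smul_convexHull] at hP ⊢
  refine isReflexive_of_convexHull_eq_setOf (hV.image _) ?_ finite_facetNormals
    (fun s hs => isLatticePoint_of_mem_facetNormals hs) hP
  rintro _ ⟨f, hf, rfl⟩ x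
  rcases hf.2 x with h | h
  · exact ⟨-chainHeight x, by simp [h]⟩
  · exact ⟨r + 2 - chainHeight x, by simp [h]⟩
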